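/- Let f : ℝ^d → ℝ be three times continuously differentiable, convex, and self-concordant. Then for all x, y ∈ ℝ^d, f(y) ≥ f(x) + ⟨∇f(x), y − x⟩ + ω(√(D²f(x)[y − x, y − x])), where ω(t) := t − ln(1 + t). -/

import Mathlib

/-!
Restrict `f` to the segment, `φ t = f (x + t • (y - x))`. Self-concordance gives
`φ''' ≥ -2 (φ'')^{3/2}`, so `φ''` stays above the solution `r² / (1 + r t)²` of the
equality case with `r² = φ'' 0` (for `r = 0` this is convexity, `φ'' ≥ 0`). Integrating
this bound twice over `[0, 1]` yields `φ 1 ≥ φ 0 + φ' 0 + r - log (1 + r)`.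
-/

open scoped RealInnerProductSpace

open Real Set

theorem hasDerivAt_iteratedFDeriv_add_smul {E F : Type*} [NormedAddCommGroup E] [NormedSpace ℝ E]
    [NormedAddCommGroup F] [NormedSpace ℝ F] {f : E → F} {n : WithTop ℕ∞} {k : ℕ}
    (hf : ContDiff ℝ n f) (hk : k < n) (x h : E) (t : ℝ) :
    HasDerivAt (fun s : ℝ => iteratedFDeriv ℝ k f (x + s • h) fun _ => h)
      (iteratedFDeriv ℝ (k + 1) f (x + t • h) fun _ => h) t := by
  have hline : HasDerivAt (fun s : ℝ => x + s • h) h t := by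
    simpa using ((hasDerivAt_id t).smul_const h).const_add x
  have hD :=
    ((hf.differentiable_iteratedFDeriv hk) (x + t • h)).hasFDerivAt.comp_hasDerivAt t hline
  exact (ContinuousMultilinearMap.apply ℝ (fun _ : Fin k => E) F fun _ => h).hasFDerivAt
    |>.comp_hasDerivAt t hD

theorem ConvexOn.monotone_of_hasDerivAt {φ φ' : ℝ → ℝ} (hφ : ConvexOn ℝ univ φ)
    (hφ' : ∀ t, HasDerivAt φ (φ' t) t) : Monotone φ' := by
  have : deriv φ = φ' := funext fun t => (hφ' t).deriv
  rw [← this, ← monotoneOn_univ]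
  exact hφ.monotoneOn_deriv fun t _ => (hφ' t).differentiableAt

theorem sq_div_one_add_mul_le_of_neg_two_mul_rpow_le {u u' : ℝ → ℝ} {r t : ℝ}
    (hu : ∀ τ, HasDerivAt u (u' τ) τ) (hu' : ∀ τ, -(2 * u τ ^ ((3 : ℝ) / 2)) ≤ u' τ)
    (hr : 0 < r) (h0 : r ^ 2 ≤ u 0) (ht : 0 ≤ t) :
    (r / (1 + r * t)) ^ 2 ≤ u t := by
  have hc : ∀ τ, 0 ≤ τ → 0 < 1 + r * τ := fun τ hτ => by positivity
  -- For `0 < s < r`, `(s / (1 + r τ))²` is a strict subsolution of `v' = -2 v^{3/2}` lying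
  -- below `u` at `0`, so `u` stays above it; then let `s → r`.
  have barrier : ∀ s ∈ Ioo 0 r, (s / (1 + r * t)) ^ 2 ≤ u t := by
    rintro s ⟨hs0, hsr⟩
    have hB : ∀ τ, 0 ≤ τ → HasDerivAt (fun τ => (s / (1 + r * τ)) ^ 2)
        (-(2 * r * s ^ 2 / (1 + r * τ) ^ 3)) τ := by
      intro τ hτ
      have hne := (hc τ hτ).ne'
      have hd : HasDerivAt (fun τ => 1 + r * τ) r τ := by
        simpa using ((hasDerivAt_id τ).const_mul r).const_add 1
      refine (((hasDerivAt_const τ s).div hd hne).pow 2).congr_deriv ?_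
      simp only [Pi.div_apply, Nat.cast_ofNat, pow_one, Nat.add_one_sub_one]
      field_simp
      ring
    refine image_le_of_deriv_right_lt_deriv_boundary
      (fun τ hτ => (hB τ hτ.1).continuousAt.continuousWithinAt)
      (fun τ hτ => (hB τ hτ.1).hasDerivWithinAt) ?_ hu ?_ ⟨ht, le_rfl⟩
    · simpa using (pow_lt_pow_left₀ hsr hs0.le two_ne_zero).le.trans h0
    · rintro τ ⟨hτ, -⟩ hτu
      have hcτ := hc τ hτ
      have hpow : u τ ^ ((3 : ℝ) / 2) = (s / (1 + r * τ)) ^ 3 := by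
        rw [← hτu, ← Real.rpow_natCast, ← Real.rpow_mul (by positivity)]
        norm_num
      refine lt_of_lt_of_le ?_ (hu' τ)
      rw [hpow, div_pow, neg_lt_neg_iff, mul_div_assoc',
        div_lt_div_iff_of_pos_right (by positivity)]
      nlinarith [pow_pos hs0 2]
  refine le_of_tendsto ?_ (Filter.eventually_of_mem (Ioo_mem_nhdsLT hr) barrier)
  exact ((continuous_id.div_const _).pow 2).continuousAt.tendsto.mono_left nhdsWithin_le_nhds

theorem image_le_of_hasDerivAt_le {f f' g g' : ℝ → ℝ} {a b : ℝ}
    (hf : ∀ t ∈ Icc a b, HasDerivAt f (f' t) t) (hg : ∀ t ∈ Icc a b, HasDerivAt g (g' t) t)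
    (ha : f a ≤ g a) (hfg' : ∀ t ∈ Ico a b, f' t ≤ g' t) :
    ∀ ⦃t⦄, t ∈ Icc a b → f t ≤ g t :=
  image_le_of_deriv_right_le_deriv_boundary
    (fun t ht => (hf t ht).continuousAt.continuousWithinAt)
    (fun t ht => (hf t (Ico_subset_Icc_self ht)).hasDerivWithinAt) ha
    (fun t ht => (hg t ht).continuousAt.continuousWithinAt)
    (fun t ht => (hg t (Ico_subset_Icc_self ht)).hasDerivWithinAt) hfg'

theorem image_le_of_hasDerivAt_hasDerivAt_le {f f' f'' g g' g'' : ℝ → ℝ} {a b : ℝ}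
    (hf : ∀ t ∈ Icc a b, HasDerivAt f (f' t) t)
    (hf' : ∀ t ∈ Icc a b, HasDerivAt f' (f'' t) t)
    (hg : ∀ t ∈ Icc a b, HasDerivAt g (g' t) t)
    (hg' : ∀ t ∈ Icc a b, HasDerivAt g' (g'' t) t)
    (ha : f a ≤ g a) (ha' : f' a ≤ g' a) (hfg'' : ∀ t ∈ Ico a b, f'' t ≤ g'' t) :
    ∀ ⦃t⦄, t ∈ Icc a b → f t ≤ g t :=
  image_le_of_hasDerivAt_le hf hg ha fun _ ht =>
    image_le_of_hasDerivAt_le hf' hg' ha' hfg'' (Ico_subset_Icc_self ht)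

theorem add_add_sqrt_sub_log_le_of_selfConcordant {φ φ' φ'' φ''' : ℝ → ℝ}
    (hconv : ConvexOn ℝ univ φ) (hφ : ∀ t, HasDerivAt φ (φ' t) t)
    (hφ' : ∀ t, HasDerivAt φ' (φ'' t) t) (hφ'' : ∀ t, HasDerivAt φ'' (φ''' t) t)
    (hsc : ∀ t, |φ''' t| ≤ 2 * φ'' t ^ ((3 : ℝ) / 2)) :
    φ 0 + φ' 0 + (√(φ'' 0) - log (1 + √(φ'' 0))) ≤ φ 1 := by
  set r := √(φ'' 0)
  have hr : 0 ≤ r := sqrt_nonneg _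
  have hc : ∀ t ∈ Icc (0 : ℝ) 1, 0 < 1 + r * t := fun t ht => by have := ht.1; positivity
  have hφ''_nonneg : ∀ t, 0 ≤ φ'' t := fun t =>
    (hφ' t).nonneg_of_monotone (hconv.monotone_of_hasDerivAt hφ)
  have hlower : ∀ t ∈ Ico (0 : ℝ) 1, (r / (1 + r * t)) ^ 2 ≤ φ'' t := by
    intro t ht
    rcases hr.eq_or_lt with hr0 | hr0
    · simpa [← hr0] using hφ''_nonneg t
    · exact sq_div_one_add_mul_le_of_neg_two_mul_rpow_le hφ''
        (fun t => neg_le_of_abs_le (hsc t)) hr0 (sq_sqrt (hφ''_nonneg 0)).le ht.1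
  have hd : ∀ t, HasDerivAt (fun t => 1 + r * t) r t := fun t => by
    simpa using ((hasDerivAt_id t).const_mul r).const_add 1
  have hω : ∀ t ∈ Icc (0 : ℝ) 1,
      HasDerivAt (fun t => φ 0 + φ' 0 * t + (r * t - log (1 + r * t)))
        (φ' 0 + (r - r / (1 + r * t))) t := fun t ht => by
    simpa using (((hasDerivAt_id t).const_mul (φ' 0)).const_add (φ 0)).fun_add
      (((hasDerivAt_id t).const_mul r).fun_sub ((hd t).log (hc t ht).ne'))
  have hω' : ∀ t ∈ Icc (0 : ℝ) 1, HasDerivAt (fun t => φ' 0 + (r - r / (1 + r * t)))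
      ((r / (1 + r * t)) ^ 2) t := fun t ht => by
    have hne := (hc t ht).ne'
    refine (((hasDerivAt_const t r).div (hd t) hne).const_sub r |>.const_add (φ' 0))
      |>.congr_deriv ?_
    field_simp
    ring
  simpa using image_le_of_hasDerivAt_hasDerivAt_le hω hω' (fun t _ => hφ t) (fun t _ => hφ' t)
    (by simp) (by simp) hlower ⟨zero_le_one, le_rfl⟩

/-- **Lemma 4, inequality (lemma_4_1) (Nesterov, Theorem 4.1.7).** If `f : ℝ^d → ℝ` is three
times continuously differentiable, convex and self-concordant, then for all `x, y`,
`f(y) ≥ f(x) + ⟨∇f(x), y − x⟩ + ω(√(D²f(x)[y − x, y − x]))` where `ω(t) = t − ln(1 + t)`. -/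
theorem self_concordant_lower_bound {d : ℕ}
    (f : EuclideanSpace ℝ (Fin d) → ℝ) (hf : ContDiff ℝ 3 f)
    (hconv : ConvexOn ℝ Set.univ f)
    (hself : ∀ x h, |iteratedFDeriv ℝ 3 f x ![h, h, h]| ≤
      2 * iteratedFDeriv ℝ 2 f x ![h, h] ^ ((3 : ℝ) / 2))
    (x y : EuclideanSpace ℝ (Fin d)) :
    f y ≥ f x + ⟪gradient f x, y - x⟫ +
      (Real.sqrt (iteratedFDeriv ℝ 2 f x ![y - x, y - x]) -
        Real.log (1 + Real.sqrt (iteratedFDeriv ℝ 2 f x ![y - x, y - x]))) := by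
  set h := y - x
  have hline : ∀ k < 3, ∀ t,
      HasDerivAt (fun s : ℝ => iteratedFDeriv ℝ k f (x + s • h) fun _ => h)
        (iteratedFDeriv ℝ (k + 1) f (x + t • h) fun _ => h) t := fun k hk =>
    hasDerivAt_iteratedFDeriv_add_smul hf (by exact_mod_cast hk) x h
  have hconv_line :
      ConvexOn ℝ univ fun s : ℝ => iteratedFDeriv ℝ 0 f (x + s • h) fun _ => h := by
    have : (fun s : ℝ => iteratedFDeriv ℝ 0 f (x + s • h) fun _ => h) =
        f ∘ AffineMap.lineMap x (x + h) := by
      ext s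
      simp [AffineMap.lineMap_apply, add_comm]
    rw [this]
    exact hconv.comp_affineMap _
  have key := add_add_sqrt_sub_log_le_of_selfConcordant hconv_line (hline 0 (by norm_num))
    (hline 1 (by norm_num)) (hline 2 (by norm_num)) fun t => by
      simpa only [Matrix.vec_single_eq_const, Matrix.vecCons_const] using hself (x + t • h) h
  rw [ge_iff_le, inner_gradient_left]
  simp only [Matrix.vec_single_eq_const, Matrix.vecCons_const]
  simpa [iteratedFDeriv_one_apply, h] using key
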